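/- With Θ_{−b} = min over β ∈ B \ {b} of max_{nonempty A₁} γ_β(A₁) (set to 1 if B = {b}), d_b⁻ = Σ_{a∈A} min{d_a, Θ_{−b} C_a} ξ_{a→b}, and f_b = Σ_{a∈A} min{d_a, Θ C_a} ξ_{a→b} where Θ = min over all b of max γ_b, one has f_b = min{ d_b⁻, s_b }. -/

import Mathlib

open scoped Classical
open Finset

/-- The average demand level of a set of upstream links. -/
noncomputable def gammaFn {ι : Type*} (C μ : ι → ℝ) (π : ℝ) (S : Finset ι) : ℝ :=
  (π + ∑ a ∈ S, C a * μ a) / ∑ a ∈ S, C a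

/-- The maximum of `f` over all nonempty subsets of a nonempty finite type. -/
noncomputable def maxSub {ι : Type*} [Fintype ι] (h : Nonempty ι) (f : Finset ι → ℝ) : ℝ :=
  (Finset.univ.powerset.filter Finset.Nonempty).sup'
    ⟨{h.some}, Finset.mem_filter.mpr
      ⟨Finset.mem_powerset.mpr (Finset.subset_univ _), Finset.singleton_nonempty _⟩⟩ f

/-- The residue supply `π_b = C_b σ_b − Σ_a C_{a→b} δ_a`. -/
noncomputable def resid {α β : Type*} [Fintype α] (Cb : β → ℝ) (Cab : α → β → ℝ)
    (δ : α → ℝ) (σ : β → ℝ) (b : β) : ℝ :=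
  Cb b * σ b - ∑ a, Cab a b * δ a

/-- `Γ_b = max_{∅ ≠ A₁ ⊆ A} γ_b(A₁)`. -/
noncomputable def maxGamma {α β : Type*} [Fintype α] (hA : Nonempty α)
    (Cb : β → ℝ) (Cab : α → β → ℝ) (δ : α → ℝ) (σ : β → ℝ) (b : β) : ℝ :=
  maxSub hA (gammaFn (fun a => Cab a b) δ (resid Cb Cab δ σ b))

/-- The critical demand level `Θ = g(δ,σ) = min_b Γ_b`. -/
noncomputable def criticalDemandLevel {α β : Type*} [Fintype α] [Fintype β]
    (hA : Nonempty α) (hB : Nonempty β) (Cb : β → ℝ) (Cab : α → β → ℝ)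
    (δ : α → ℝ) (σ : β → ℝ) : ℝ :=
  Finset.univ.inf' Finset.univ_nonempty (maxGamma hA Cb Cab δ σ)

/-- `Θ_{−b} = min_{β ∈ B \ {b}} Γ_β`, set to `1` if `B = {b}`. -/
noncomputable def thetaWithout {α β : Type*} [Fintype α] [Fintype β]
    (hA : Nonempty α) (Cb : β → ℝ) (Cab : α → β → ℝ)
    (δ : α → ℝ) (σ : β → ℝ) (b : β) : ℝ :=
  if h : (Finset.univ.erase b).Nonempty then
    (Finset.univ.erase b).inf' h (maxGamma hA Cb Cab δ σ)
  else 1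

section Helpers

variable {ι : Type*} [Fintype ι]

lemma Fmono (Cab : ι → ℝ) (hC : ∀ a, 0 ≤ Cab a) (δ : ι → ℝ) {x y : ℝ} (hxy : x ≤ y) :
    ∑ a, Cab a * min (δ a) x ≤ ∑ a, Cab a * min (δ a) y :=
  Finset.sum_le_sum fun a _ => mul_le_mul_of_nonneg_left (min_le_min le_rfl hxy) (hC a)

lemma Fle (Cab : ι → ℝ) (hC : ∀ a, 0 ≤ Cab a) (δ : ι → ℝ) (x : ℝ) :
    ∑ a, Cab a * min (δ a) x ≤ ∑ a, Cab a * δ a :=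
  Finset.sum_le_sum fun a _ => mul_le_mul_of_nonneg_left (min_le_left _ _) (hC a)

lemma mem_maxSub_filter {S : Finset ι} (hS : S.Nonempty) :
    S ∈ Finset.univ.powerset.filter Finset.Nonempty :=
  Finset.mem_filter.mpr ⟨Finset.mem_powerset.mpr (Finset.subset_univ _), hS⟩

lemma key1 (hA : Nonempty ι) (Cab : ι → ℝ) (hC : ∀ a, 0 < Cab a) (δ : ι → ℝ) (s : ℝ) :
    ∑ a, Cab a * min (δ a) (maxSub hA (gammaFn Cab δ (s - ∑ a, Cab a * δ a))) ≤ s := by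
  set G := maxSub hA (gammaFn Cab δ (s - ∑ a, Cab a * δ a)) with hG
  obtain ⟨S, hS, hGS⟩ :=
    Finset.exists_mem_eq_sup' (α := ℝ)
      ⟨{hA.some}, mem_maxSub_filter (Finset.singleton_nonempty _)⟩
      (gammaFn Cab δ (s - ∑ a, Cab a * δ a))
  have hSne : S.Nonempty := (Finset.mem_filter.mp hS).2
  have hpos : (0:ℝ) < ∑ a ∈ S, Cab a := Finset.sum_pos (fun a _ => hC a) hSne
  have hGval : G = gammaFn Cab δ (s - ∑ a, Cab a * δ a) S := hGS
  have hGmul : G * ∑ a ∈ S, Cab a = (s - ∑ a, Cab a * δ a) + ∑ a ∈ S, Cab a * δ a := by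
    rw [hGval, gammaFn, div_mul_cancel₀ _ hpos.ne']
  have hsplit : ∑ a, Cab a * min (δ a) G
      = ∑ a ∈ S, Cab a * min (δ a) G + ∑ a ∈ Sᶜ, Cab a * min (δ a) G :=
    (Finset.sum_add_sum_compl S _).symm
  have h1 : ∑ a ∈ S, Cab a * min (δ a) G ≤ ∑ a ∈ S, Cab a * G :=
    Finset.sum_le_sum fun a _ => mul_le_mul_of_nonneg_left (min_le_right _ _) (hC a).le
  have h2 : ∑ a ∈ Sᶜ, Cab a * min (δ a) G ≤ ∑ a ∈ Sᶜ, Cab a * δ a :=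
    Finset.sum_le_sum fun a _ => mul_le_mul_of_nonneg_left (min_le_left _ _) (hC a).le
  have h3 : ∑ a ∈ S, Cab a * G = G * ∑ a ∈ S, Cab a := by
    rw [Finset.mul_sum]; exact Finset.sum_congr rfl fun a _ => mul_comm _ _
  have h4 : ∑ a ∈ S, Cab a * δ a + ∑ a ∈ Sᶜ, Cab a * δ a = ∑ a, Cab a * δ a :=
    Finset.sum_add_sum_compl S _
  calc ∑ a, Cab a * min (δ a) G
      ≤ ∑ a ∈ S, Cab a * G + ∑ a ∈ Sᶜ, Cab a * δ a := by
        rw [hsplit]; exact add_le_add h1 h2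
    _ = s := by rw [h3, hGmul]; linarith [h4]

lemma key2 (hA : Nonempty ι) (Cab : ι → ℝ) (hC : ∀ a, 0 < Cab a) (δ : ι → ℝ) (s : ℝ) :
    (∀ a, δ a ≤ maxSub hA (gammaFn Cab δ (s - ∑ a, Cab a * δ a))) ∨
      s ≤ ∑ a, Cab a * min (δ a) (maxSub hA (gammaFn Cab δ (s - ∑ a, Cab a * δ a))) := by
  set G := maxSub hA (gammaFn Cab δ (s - ∑ a, Cab a * δ a)) with hG
  by_cases h : ∀ a, δ a ≤ G
  · exact Or.inl h
  right
  push_neg at h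
  obtain ⟨a₀, ha₀⟩ := h
  set S : Finset ι := Finset.univ.filter (fun a => G < δ a) with hSdef
  have hSne : S.Nonempty := ⟨a₀, Finset.mem_filter.mpr ⟨Finset.mem_univ _, ha₀⟩⟩
  have hpos : (0:ℝ) < ∑ a ∈ S, Cab a := Finset.sum_pos (fun a _ => hC a) hSne
  have hle : gammaFn Cab δ (s - ∑ a, Cab a * δ a) S ≤ G :=
    Finset.le_sup' _ (mem_maxSub_filter hSne)
  rw [gammaFn, div_le_iff₀ hpos] at hle
  have h1 : ∑ a ∈ S, Cab a * min (δ a) G = G * ∑ a ∈ S, Cab a := by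
    rw [Finset.mul_sum]
    refine Finset.sum_congr rfl fun a ha => ?_
    rw [min_eq_right (le_of_lt (Finset.mem_filter.mp ha).2), mul_comm]
  have h2 : ∑ a ∈ Sᶜ, Cab a * min (δ a) G = ∑ a ∈ Sᶜ, Cab a * δ a := by
    refine Finset.sum_congr rfl fun a ha => ?_
    have : ¬ G < δ a := fun hc =>
      (Finset.mem_compl.mp ha) (Finset.mem_filter.mpr ⟨Finset.mem_univ _, hc⟩)
    rw [min_eq_left (not_lt.mp this)]
  have hsplit : ∑ a, Cab a * min (δ a) G
      = ∑ a ∈ S, Cab a * min (δ a) G + ∑ a ∈ Sᶜ, Cab a * min (δ a) G :=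
    (Finset.sum_add_sum_compl S _).symm
  have h4 : ∑ a ∈ S, Cab a * δ a + ∑ a ∈ Sᶜ, Cab a * δ a = ∑ a, Cab a * δ a :=
    Finset.sum_add_sum_compl S _
  rw [hsplit, h1, h2]
  linarith

end Helpers

/-- with the effective upstream demand
`d_b⁻ = Σ_a min{d_a, Θ_{−b} C_a} ξ_{a→b}` of downstream link `b`, the in-flux
`f_b = Σ_a min{d_a, Θ C_a} ξ_{a→b}` satisfies `f_b = min{d_b⁻, s_b}`. -/
theorem downstream_flux_eq_min_effectiveDemand_supply
    {α β : Type*} [Fintype α] [Fintype β] (hA : Nonempty α) (hB : Nonempty β)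
    (Ca : α → ℝ) (Cb : β → ℝ) (ξ : α → β → ℝ) (δ : α → ℝ) (σ : β → ℝ)
    (hCa : ∀ a, 0 < Ca a) (hCb : ∀ b, 0 < Cb b)
    (hξ : ∀ a b, 0 < ξ a b) (hξsum : ∀ a, ∑ b, ξ a b = 1)
    (hδ : ∀ a, δ a ∈ Set.Icc (0 : ℝ) 1) (hσ : ∀ b, σ b ∈ Set.Icc (0 : ℝ) 1) :
    ∀ b : β,
      ∑ a, min (δ a * Ca a)
            (criticalDemandLevel hA hB Cb (fun a b => Ca a * ξ a b) δ σ * Ca a) * ξ a b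
        = min
            (∑ a, min (δ a * Ca a)
              (thetaWithout hA Cb (fun a b => Ca a * ξ a b) δ σ b * Ca a) * ξ a b)
            (σ b * Cb b) := by
  intro b
  set Cab : α → β → ℝ := fun a b => Ca a * ξ a b with hCab
  have hCabpos : ∀ a, 0 < Cab a b := fun a => mul_pos (hCa a) (hξ a b)
  set s : ℝ := σ b * Cb b with hs
  have hresid : resid Cb Cab δ σ b = s - ∑ a, Cab a b * δ a := by
    simp only [resid, hs, mul_comm]
  set G := maxGamma hA Cb Cab δ σ b with hGdef
  have hGeq : G = maxSub hA (gammaFn (fun a => Cab a b) δ (s - ∑ a, Cab a b * δ a)) := by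
    rw [hGdef, maxGamma, hresid]
  -- rewrite summands
  have hsum : ∀ θ : ℝ, ∑ a, min (δ a * Ca a) (θ * Ca a) * ξ a b
      = ∑ a, Cab a b * min (δ a) θ := by
    intro θ
    refine Finset.sum_congr rfl fun a _ => ?_
    rw [← min_mul_of_nonneg _ _ (hCa a).le]
    ring
  rw [hsum, hsum]
  -- key facts
  have key1b : ∑ a, Cab a b * min (δ a) G ≤ s := by
    rw [hGeq]; exact key1 hA _ hCabpos δ s
  have key2b := key2 hA _ hCabpos δ s
  rw [← hGeq] at key2b
  -- main lemma
  have main : ∀ θ : ℝ, (∑ a, Cab a b * min (δ a) G) ≤ (∑ a, Cab a b * min (δ a) θ) →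
      (∑ a, Cab a b * min (δ a) G) = min (∑ a, Cab a b * min (δ a) θ) s := by
    intro θ hle
    rcases key2b with hδle | hsle
    · have hFG : ∑ a, Cab a b * min (δ a) G = ∑ a, Cab a b * δ a :=
        Finset.sum_congr rfl fun a _ => by rw [min_eq_left (hδle a)]
      have h2 : ∑ a, Cab a b * min (δ a) θ ≤ ∑ a, Cab a b * min (δ a) G := by
        rw [hFG]; exact Fle _ (fun a => (hCabpos a).le) _ _
      have heq := le_antisymm hle h2
      rw [heq, eq_comm]
      exact min_eq_left (heq ▸ key1b)
    · exact le_antisymm (le_min hle key1b) (le_trans (min_le_right _ _) hsle)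
  have hΘleG : criticalDemandLevel hA hB Cb Cab δ σ ≤ G :=
    Finset.inf'_le _ (Finset.mem_univ b)
  by_cases hsing : (Finset.univ.erase b).Nonempty
  · set T' := (Finset.univ.erase b).inf' hsing (maxGamma hA Cb Cab δ σ) with hT'
    have hTW : thetaWithout hA Cb Cab δ σ b = T' := dif_pos hsing
    have hmin : criticalDemandLevel hA hB Cb Cab δ σ = min G T' := by
      apply le_antisymm
      · refine le_min hΘleG ?_
        obtain ⟨y, hy, hyeq⟩ := Finset.exists_mem_eq_inf' hsing (maxGamma hA Cb Cab δ σ)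
        calc criticalDemandLevel hA hB Cb Cab δ σ ≤ maxGamma hA Cb Cab δ σ y :=
              Finset.inf'_le _ (Finset.mem_univ y)
          _ = T' := hyeq.symm
      · obtain ⟨x, hx, hxeq⟩ :=
          Finset.exists_mem_eq_inf' (Finset.univ_nonempty (α := β)) (maxGamma hA Cb Cab δ σ)
        rw [show criticalDemandLevel hA hB Cb Cab δ σ = maxGamma hA Cb Cab δ σ x from hxeq]
        by_cases hxb : x = b
        · subst hxb; exact min_le_left _ _
        · exact le_trans (min_le_right _ _)
            (Finset.inf'_le _ (Finset.mem_erase.mpr ⟨hxb, Finset.mem_univ x⟩))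
    rw [hTW, hmin]
    rcases le_total T' G with hc | hc
    · rw [min_eq_right hc, eq_comm]
      refine min_eq_left ?_
      exact le_trans (le_trans (Fmono _ (fun a => (hCabpos a).le) δ hc) key1b) le_rfl
    · rw [min_eq_left hc]
      exact main T' (Fmono _ (fun a => (hCabpos a).le) δ hc)
  · have hTW : thetaWithout hA Cb Cab δ σ b = 1 := dif_neg hsing
    have huniv : (Finset.univ : Finset β) = {b} := by
      rw [Finset.not_nonempty_iff_eq_empty] at hsing
      ext x
      simp only [Finset.mem_univ, Finset.mem_singleton, true_iff]
      by_contra hx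
      have : x ∈ Finset.univ.erase b := Finset.mem_erase.mpr ⟨hx, Finset.mem_univ x⟩
      rw [hsing] at this
      exact absurd this (Finset.notMem_empty x)
    have hΘ : criticalDemandLevel hA hB Cb Cab δ σ = G := by
      refine le_antisymm hΘleG ?_
      obtain ⟨x, hx, hxeq⟩ :=
        Finset.exists_mem_eq_inf' (Finset.univ_nonempty (α := β)) (maxGamma hA Cb Cab δ σ)
      have hxb : x = b := by
        have : x ∈ ({b} : Finset β) := huniv ▸ Finset.mem_univ x
        exact Finset.mem_singleton.mp this
      rw [show criticalDemandLevel hA hB Cb Cab δ σ = maxGamma hA Cb Cab δ σ x from hxeq, hxb]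
    rw [hTW, hΘ]
    refine main 1 ?_
    have hF1 : ∑ a, Cab a b * min (δ a) 1 = ∑ a, Cab a b * δ a :=
      Finset.sum_congr rfl fun a _ => by rw [min_eq_left (hδ a).2]
    rw [hF1]
    exact Fle _ (fun a => (hCabpos a).le) _ _
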